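/- arXiv:1610.06058 — 2 statements merged into one kernel-verified Lean document; each statement's English description precedes it below -/
import Mathlib

section
/- If G is a finite simple König-Egerváry graph, i.e. its matching number equals its covering number, then the number of maximal independent sets of G equals 2^ν(G) if and only if G is bipartite and its induced matching number equals its matching number (i.e., G is a Cameron-Walker bipartite graph). -/
variable {V : Type*}

/-- `S` is an independent set of `G`: no two vertices of `S` are adjacent. -/
def IsIndepSet (G : SimpleGraph V) (S : Set V) : Prop :=
  ∀ ⦃u v : V⦄, u ∈ S → v ∈ S → ¬ G.Adj u v

/-- `S` is a maximal independent set of `G`. -/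
def IsMaxIndepSet (G : SimpleGraph V) (S : Set V) : Prop :=
  IsIndepSet G S ∧ ∀ T : Set V, IsIndepSet G T → S ⊆ T → S = T

/-- `m(G)`: the number of maximal independent sets of `G`. -/
noncomputable def numMaxIndep (G : SimpleGraph V) : ℕ :=
  {S : Set V | IsMaxIndepSet G S}.ncard

/-- `C` is a vertex cover of `G`: every edge has at least one endpoint in `C`. -/
def IsVertexCover (G : SimpleGraph V) (C : Set V) : Prop :=
  ∀ ⦃u v : V⦄, G.Adj u v → u ∈ C ∨ v ∈ C

/-- `β(G)`: the minimum size of a vertex cover of `G`. -/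
noncomputable def coverNumber (G : SimpleGraph V) : ℕ :=
  sInf {n : ℕ | ∃ C : Set V, IsVertexCover G C ∧ C.ncard = n}

/-- `M` is a matching of `G`: a set of edges of `G`, pairwise sharing no vertex. -/
def IsMatching (G : SimpleGraph V) (M : Set (Sym2 V)) : Prop :=
  M ⊆ G.edgeSet ∧ ∀ e ∈ M, ∀ f ∈ M, e ≠ f → ∀ v : V, v ∈ e → v ∉ f

/-- `M` is an induced matching of `G`: a matching such that no two distinct
edges of `M` are joined by an edge of `G`. -/
def IsInducedMatching (G : SimpleGraph V) (M : Set (Sym2 V)) : Prop :=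
  IsMatching G M ∧ ∀ e ∈ M, ∀ f ∈ M, e ≠ f → ∀ u v : V, u ∈ e → v ∈ f → ¬ G.Adj u v

/-- `ν(G)`: the maximum size of a matching of `G`. -/
noncomputable def matchingNumber (G : SimpleGraph V) : ℕ :=
  sSup {n : ℕ | ∃ M : Set (Sym2 V), IsMatching G M ∧ M.ncard = n}

/-- `ν₀(G)`: the maximum size of an induced matching of `G`. -/
noncomputable def inducedMatchingNumber (G : SimpleGraph V) : ℕ :=
  sSup {n : ℕ | ∃ M : Set (Sym2 V), IsInducedMatching G M ∧ M.ncard = n}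

/-- `G` is bipartite: the vertices split into two sides with every edge crossing. -/
def IsBipartite (G : SimpleGraph V) : Prop :=
  ∃ A : Set V, ∀ ⦃u v : V⦄, G.Adj u v → (u ∈ A ↔ v ∉ A)

/-!
A maximal independent set `S` is determined by its trace `S ∩ C` on a vertex cover `C`: a vertex
outside `C` has all its neighbours in `C`, so it lies in `S` exactly when it has no neighbour in
`S ∩ C`. Hence `m(G) ≤ 2 ^ |C|`. Conversely, if `M` is an induced matching, every choice of one
endpoint from each edge of `M` is independent and extends to a maximal independent set, and
different choices give different sets, so `2 ^ |M| ≤ m(G)`. For a König-Egerváry graph with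
`ν₀ = ν` the two bounds meet.

If `m(G) = 2 ^ |C|` for a minimum vertex cover `C`, every subset of `C` is a trace. The trace `C`
shows that `C` is independent, so `G` is bipartite; the trace `C \ {c}` produces a leaf hanging
at `c`. These pendant edges form an induced matching of size `|C| = ν`.
-/

variable {G : SimpleGraph V}

def IsPendantNeighbor (G : SimpleGraph V) (c v : V) : Prop :=
  G.Adj c v ∧ ∀ u, G.Adj v u → u = c

theorem IsIndepSet.exists_isMaxIndepSet_superset [Finite V] {S : Set V} (hS : IsIndepSet G S) :
    ∃ T, IsMaxIndepSet G T ∧ S ⊆ T := by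
  obtain ⟨T, hST, hT⟩ := Finite.exists_le_maximal (p := IsIndepSet G) hS
  exact ⟨T, ⟨hT.1, fun T' hT' hTT' => hTT'.antisymm (hT.2 hT' hTT')⟩, hST⟩

theorem IsMaxIndepSet.exists_adj_of_notMem {S : Set V} (hS : IsMaxIndepSet G S) {x : V}
    (hx : x ∉ S) : ∃ y ∈ S, G.Adj x y := by
  by_contra! h
  have hins : IsIndepSet G (insert x S) := by
    rintro u v (rfl | hu) (rfl | hv) huv
    · exact G.irrefl huv
    · exact h v hv huv
    · exact h u hu huv.symm
    · exact hS.1 hu hv huv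
  exact hx (hS.2 _ hins (Set.subset_insert x S) ▸ Set.mem_insert x S)

theorem IsMaxIndepSet.subset_of_inter_eq {C S₁ S₂ : Set V} (hC : IsVertexCover G C)
    (h₁ : IsMaxIndepSet G S₁) (h₂ : IsMaxIndepSet G S₂) (h : S₁ ∩ C = S₂ ∩ C) : S₁ ⊆ S₂ := by
  intro v hv
  by_contra hv₂
  by_cases hvC : v ∈ C
  · exact hv₂ (h ▸ ⟨hv, hvC⟩ : v ∈ S₂ ∩ C).1
  · obtain ⟨y, hy, hvy⟩ := h₂.exists_adj_of_notMem hv₂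
    have hyC : y ∈ C := (hC hvy).resolve_left hvC
    exact h₁.1 hv (h ▸ ⟨hy, hyC⟩ : y ∈ S₁ ∩ C).1 hvy

theorem IsVertexCover.injOn_inter {C : Set V} (hC : IsVertexCover G C) :
    Set.InjOn (· ∩ C) {S | IsMaxIndepSet G S} := fun _ h₁ _ h₂ h =>
  (h₁.subset_of_inter_eq hC h₂ h).antisymm (h₂.subset_of_inter_eq hC h₁ h.symm)

theorem IsVertexCover.numMaxIndep_le [Finite V] {C : Set V} (hC : IsVertexCover G C) :
    numMaxIndep G ≤ 2 ^ C.ncard := by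
  rw [numMaxIndep, ← hC.injOn_inter.ncard_image, ← Set.ncard_powerset C]
  exact Set.ncard_le_ncard (Set.image_subset_iff.2 fun _ _ => Set.inter_subset_right)

theorem IsVertexCover.exists_isMaxIndepSet_inter_eq [Finite V] {C T : Set V}
    (hC : IsVertexCover G C) (hm : numMaxIndep G = 2 ^ C.ncard) (hT : T ⊆ C) :
    ∃ S, IsMaxIndepSet G S ∧ S ∩ C = T := by
  have himg : (· ∩ C) '' {S | IsMaxIndepSet G S} = 𝒫 C := by
    refine Set.eq_of_subset_of_ncard_le
      (Set.image_subset_iff.2 fun _ _ => Set.inter_subset_right) ?_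
    rw [Set.ncard_powerset, hC.injOn_inter.ncard_image]
    exact hm.ge
  exact himg.superset hT

theorem IsVertexCover.isIndepSet_of_numMaxIndep_eq [Finite V] {C : Set V}
    (hC : IsVertexCover G C) (hm : numMaxIndep G = 2 ^ C.ncard) : IsIndepSet G C := by
  obtain ⟨S, hS, hSC⟩ := hC.exists_isMaxIndepSet_inter_eq hm subset_rfl
  have hCS : C ⊆ S := Set.inter_eq_right.1 hSC
  exact fun u v hu hv => hS.1 (hCS hu) (hCS hv)

theorem IsVertexCover.exists_isPendantNeighbor_of_numMaxIndep_eq [Finite V] {C : Set V}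
    (hC : IsVertexCover G C) (hm : numMaxIndep G = 2 ^ C.ncard) {c : V} (hc : c ∈ C) :
    ∃ v, IsPendantNeighbor G c v := by
  obtain ⟨S, hS, hSC⟩ := hC.exists_isMaxIndepSet_inter_eq hm (Set.sdiff_subset : C \ {c} ⊆ C)
  have hcS : c ∉ S := fun h => (hSC ▸ ⟨h, hc⟩ : c ∈ C \ {c}).2 rfl
  obtain ⟨v, hvS, hcv⟩ := hS.exists_adj_of_notMem hcS
  have hvC : v ∉ C := fun hvC => hC.isIndepSet_of_numMaxIndep_eq hm hc hvC hcv
  refine ⟨v, hcv, fun u hvu => ?_⟩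
  by_contra huc
  have huC : u ∈ C := (hC hvu).resolve_left hvC
  exact hS.1 hvS (hSC ▸ ⟨huC, huc⟩ : u ∈ S ∩ C).1 hvu

theorem IsVertexCover.isBipartite_of_isIndepSet {C : Set V} (hC : IsVertexCover G C)
    (hI : IsIndepSet G C) : IsBipartite G :=
  ⟨C, fun _ _ huv => ⟨fun hu hv => hI hu hv huv, (hC huv).resolve_right⟩⟩

theorem isInducedMatching_of_forall_not_adj {M : Set (Sym2 V)} (hM : M ⊆ G.edgeSet)
    (h : ∀ e ∈ M, ∀ f ∈ M, e ≠ f → ∀ u v : V, u ∈ e → v ∈ f → ¬ G.Adj u v) :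
    IsInducedMatching G M := by
  refine ⟨⟨hM, fun e he f hf hef v hve hvf => ?_⟩, h⟩
  obtain ⟨w, rfl⟩ := Sym2.mem_iff_exists.1 hve
  -- two edges sharing `v` are joined by the first one
  exact h _ he f hf hef w v (Sym2.mem_mk_right v w) hvf (G.mem_edgeSet.1 (hM he)).symm

theorem IsIndepSet.exists_isInducedMatching_ncard_eq {C : Set V} (hC : IsIndepSet G C)
    (hpend : ∀ c ∈ C, ∃ v, IsPendantNeighbor G c v) :
    ∃ M, IsInducedMatching G M ∧ M.ncard = C.ncard := by
  choose! ℓ hℓ using hpend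
  have hjoin :
      ∀ c ∈ C, ∀ c' ∈ C, ∀ x ∈ s(c, ℓ c), ∀ y ∈ s(c', ℓ c'), G.Adj x y → c = c' := by
    intro c hc c' hc' x hx y hy hxy
    rw [Sym2.mem_iff] at hx hy
    rcases hx with rfl | rfl <;> rcases hy with rfl | rfl
    · exact absurd hxy (hC hc hc')
    · exact (hℓ c' hc').2 _ hxy.symm
    · exact ((hℓ c hc).2 _ hxy).symm
    · have hℓc : ℓ c = c' := (hℓ c' hc').2 _ hxy.symm
      exact absurd (hℓc ▸ (hℓ c hc).1) (hC hc hc')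
  refine ⟨(fun c => s(c, ℓ c)) '' C, isInducedMatching_of_forall_not_adj ?_ ?_, ?_⟩
  · rintro _ ⟨c, hc, rfl⟩
    exact (hℓ c hc).1
  · rintro _ ⟨c, hc, rfl⟩ _ ⟨c', hc', rfl⟩ hne x y hx hy hxy
    exact hne (congrArg (fun c => s(c, ℓ c)) (hjoin c hc c' hc' x hx y hy hxy))
  · refine Set.InjOn.ncard_image fun c hc c' hc' h => ?_
    exact hjoin c hc c' hc' c (Sym2.mem_mk_left _ _) (ℓ c) (h ▸ Sym2.mem_mk_right _ _)
      (hℓ c hc).1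

theorem IsInducedMatching.two_pow_ncard_le_numMaxIndep [Finite V] {M : Set (Sym2 V)}
    (hM : IsInducedMatching G M) : 2 ^ M.ncard ≤ numMaxIndep G := by
  let pick (f : M → Bool) (e : M) : V := if f e then e.1.out.1 else e.1.out.2
  have hpick_mem (f : M → Bool) (e : M) : pick f e ∈ e.1 := by
    unfold pick
    split
    exacts [Sym2.out_fst_mem _, Sym2.out_snd_mem _]
  have hpick_adj (f g : M → Bool) (e : M) (he : f e ≠ g e) : G.Adj (pick f e) (pick g e) := by
    have hout : G.Adj e.1.out.1 e.1.out.2 := by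
      rw [← G.mem_edgeSet, Sym2.mk, e.1.out_eq]
      exact hM.1.1 e.2
    cases hf : f e <;> cases hg : g e <;> simp_all [pick, hout.symm]
  have hindep (f : M → Bool) : IsIndepSet G (Set.range (pick f)) := by
    rintro _ _ ⟨e, rfl⟩ ⟨e', rfl⟩ hadj
    by_cases hee' : e = e'
    · subst hee'
      exact G.irrefl hadj
    · exact hM.2 e e.2 e' e'.2 (Subtype.coe_ne_coe.2 hee') _ _ (hpick_mem f e) (hpick_mem f e')
        hadj
  choose F hF hpickF using fun f => (hindep f).exists_isMaxIndepSet_superset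
  have hFinj : Function.Injective fun f => (⟨F f, hF f⟩ : {S | IsMaxIndepSet G S}) := by
    intro f g hfg
    by_contra hne
    obtain ⟨e, he⟩ := Function.ne_iff.1 hne
    have hFfg : F f = F g := congrArg Subtype.val hfg
    exact (hF g).1 (hFfg ▸ hpickF f ⟨e, rfl⟩) (hpickF g ⟨e, rfl⟩) (hpick_adj f g e he)
  calc 2 ^ M.ncard = Nat.card (M → Bool) := by
        rw [Nat.card_fun, Nat.card_eq_fintype_card, Fintype.card_bool, Nat.card_coe_set_eq]
    _ ≤ numMaxIndep G := Nat.card_le_card_of_injective _ hFinj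

theorem bddAbove_ncard_setOf {α : Type*} [Finite α] (p : Set α → Prop) :
    BddAbove {n : ℕ | ∃ s : Set α, p s ∧ s.ncard = n} :=
  ⟨Nat.card α, by rintro _ ⟨s, -, rfl⟩; exact Set.ncard_le_card s⟩

theorem exists_isVertexCover_ncard_eq_coverNumber (G : SimpleGraph V) :
    ∃ C, IsVertexCover G C ∧ C.ncard = coverNumber G := by
  refine Nat.sInf_mem (s := {n | ∃ C : Set V, IsVertexCover G C ∧ C.ncard = n}) ?_
  exact ⟨_, Set.univ, fun _ _ _ => Or.inl trivial, rfl⟩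

theorem exists_isInducedMatching_ncard_eq_inducedMatchingNumber [Finite V] (G : SimpleGraph V) :
    ∃ M, IsInducedMatching G M ∧ M.ncard = inducedMatchingNumber G := by
  refine Nat.sSup_mem ?_ (bddAbove_ncard_setOf _)
  exact ⟨0, ∅, isInducedMatching_of_forall_not_adj (Set.empty_subset _) (by simp), by simp⟩

theorem IsInducedMatching.ncard_le_inducedMatchingNumber [Finite V] {M : Set (Sym2 V)}
    (hM : IsInducedMatching G M) : M.ncard ≤ inducedMatchingNumber G :=
  le_csSup (bddAbove_ncard_setOf _) ⟨M, hM, rfl⟩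

theorem inducedMatchingNumber_le_matchingNumber [Finite V] (G : SimpleGraph V) :
    inducedMatchingNumber G ≤ matchingNumber G := by
  obtain ⟨M, hM, hMν₀⟩ := exists_isInducedMatching_ncard_eq_inducedMatchingNumber G
  exact hMν₀ ▸ le_csSup (bddAbove_ncard_setOf _) ⟨M, hM.1, rfl⟩

/-- If `G` is a König-Egerváry graph then `m(G) = 2 ^ ν(G)` iff `G`
is a Cameron-Walker bipartite graph. -/
theorem numMaxIndep_eq_two_pow_matchingNumber_iff_of_koenig [Fintype V] (G : SimpleGraph V)
    (hKE : coverNumber G = matchingNumber G) :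
    numMaxIndep G = 2 ^ matchingNumber G ↔
      IsBipartite G ∧ inducedMatchingNumber G = matchingNumber G := by
  obtain ⟨C, hC, hCβ⟩ := exists_isVertexCover_ncard_eq_coverNumber G
  have hνC : matchingNumber G = C.ncard := hKE.symm.trans hCβ.symm
  rw [hνC]
  constructor
  · intro hm
    have hI := hC.isIndepSet_of_numMaxIndep_eq hm
    obtain ⟨M, hM, hMC⟩ := hI.exists_isInducedMatching_ncard_eq fun _ hc =>
      hC.exists_isPendantNeighbor_of_numMaxIndep_eq hm hc
    refine ⟨hC.isBipartite_of_isIndepSet hI, le_antisymm ?_ ?_⟩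
    · exact hνC ▸ inducedMatchingNumber_le_matchingNumber G
    · exact hMC ▸ hM.ncard_le_inducedMatchingNumber
  · rintro ⟨-, hν₀⟩
    obtain ⟨M, hM, hMν₀⟩ := exists_isInducedMatching_ncard_eq_inducedMatchingNumber G
    exact le_antisymm hC.numMaxIndep_le (hν₀ ▸ hMν₀ ▸ hM.two_pow_ncard_le_numMaxIndep)
end

section
/- If G is a finite simple bipartite graph whose induced matching number equals its matching number (a Cameron-Walker bipartite graph), then the number of maximal independent sets of G equals 2^β(G), where β(G) is the covering number of G. -/
variable {V : Type*}

/-!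
Take a maximum matching `M` of `G` that is induced. Every edge `uv` of `M` has an endpoint that
is a leaf: otherwise `u` and `v` have further neighbours `u'` and `v'`, which lie on no edge of
`M` because `M` is induced and are distinct because `G` is bipartite, so `u'uvv'` is an
augmenting path. The other endpoints form an independent vertex cover `P` with a pendant edge at
each of its vertices. A maximal independent set is then determined by its trace on `P`, and every
subset of `P` is such a trace, so `m(G) = 2 ^ |P|`; and a vertex cover must meet the `|P|`
pairwise disjoint pendant edges, so `β(G) = |P|`.
-/

variable {G : SimpleGraph V}

theorem isMaxIndepSet_iff {S : Set V} :
    IsMaxIndepSet G S ↔ IsIndepSet G S ∧ ∀ v ∉ S, ∃ s ∈ S, G.Adj v s := by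
  refine ⟨fun hS => ⟨hS.1, fun v hv => ?_⟩, fun ⟨hS, hdom⟩ => ⟨hS, fun T hT hST => ?_⟩⟩
  · by_contra! hfree
    have hins : IsIndepSet G (insert v S) := by
      rintro x y (rfl | hx) (rfl | hy) hxy
      · exact hxy.ne rfl
      · exact hfree y hy hxy
      · exact hfree x hx hxy.symm
      · exact hS.1 hx hy hxy
    exact hv (hS.2 _ hins (Set.subset_insert v S) ▸ Set.mem_insert v S)
  · refine hST.antisymm fun v hvT => ?_
    by_contra hvS
    obtain ⟨s, hs, hvs⟩ := hdom v hvS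
    exact hT hvT (hST hs) hvs

structure IsIndepCoverWithPendants (G : SimpleGraph V) (P : Set V) : Prop where
  indep : IsIndepSet G P
  cover : IsVertexCover G P
  exists_pendant : ∀ p ∈ P, ∃ q, G.neighborSet q = {p}

namespace IsIndepCoverWithPendants

variable {P : Set V}

theorem coverNumber_eq [Finite V] (hP : IsIndepCoverWithPendants G P) :
    coverNumber G = P.ncard := by
  refine le_antisymm (Nat.sInf_le ⟨P, hP.cover, rfl⟩)
    (le_csInf ⟨_, P, hP.cover, rfl⟩ ?_)
  rintro _ ⟨C, hC, rfl⟩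
  classical
  choose! q hq using hP.exists_pendant
  have hadj : ∀ p ∈ P, G.Adj (q p) p := fun p hp => by
    simp [← SimpleGraph.mem_neighborSet, hq p hp]
  -- `C` meets each pendant edge `{p, q p}`, and these edges are pairwise disjoint.
  refine Set.ncard_le_ncard_of_injOn (fun p => if p ∈ C then p else q p) ?_ ?_
  · intro p hp
    split_ifs with hpC
    · exact hpC
    · exact (hC (hadj p hp)).resolve_right hpC
  · intro p₁ hp₁ p₂ hp₂ h
    dsimp only at h
    split_ifs at h
    · exact h
    · exact absurd (h ▸ hadj p₂ hp₂) (hP.indep hp₁ hp₂)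
    · exact absurd (h ▸ hadj p₁ hp₁) (hP.indep hp₂ hp₁)
    · simpa [hq p₁ hp₁, hq p₂ hp₂] using congrArg G.neighborSet h

/-- The maximal independent set with trace `T` on `P`. -/
def extend (G : SimpleGraph V) (P T : Set V) : Set V :=
  T ∪ {v | v ∉ P ∧ ∀ t ∈ T, ¬ G.Adj v t}

theorem extend_inter {T : Set V} (hT : T ⊆ P) : extend G P T ∩ P = T := by
  ext v
  simp only [extend, Set.mem_inter_iff, Set.mem_union, Set.mem_ofPred_eq]
  exact ⟨fun ⟨h, hvP⟩ => h.resolve_right fun h' => h'.1 hvP, fun hv => ⟨.inl hv, hT hv⟩⟩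

theorem isMaxIndepSet_extend (hP : IsIndepCoverWithPendants G P) {T : Set V} (hT : T ⊆ P) :
    IsMaxIndepSet G (extend G P T) := by
  refine isMaxIndepSet_iff.mpr ⟨?_, fun v hv => ?_⟩
  · rintro x y (hx | ⟨hxP, hx⟩) (hy | ⟨hyP, hy⟩) hxy
    · exact hP.indep (hT hx) (hT hy) hxy
    · exact hy x hx hxy.symm
    · exact hx y hy hxy
    · exact (hP.cover hxy).elim hxP hyP
  simp only [extend, Set.mem_union, Set.mem_ofPred_eq, not_or, not_and, not_forall,
    not_not] at hv
  by_cases hvP : v ∈ P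
  · obtain ⟨q, hq⟩ := hP.exists_pendant v hvP
    have hqv : G.Adj q v := by rw [← SimpleGraph.mem_neighborSet, hq]; rfl
    refine ⟨q, .inr ⟨fun hqP => hP.indep hqP hvP hqv, fun t ht hqt => ?_⟩, hqv.symm⟩
    rw [← SimpleGraph.mem_neighborSet, hq, Set.mem_singleton_iff] at hqt
    exact hv.1 (hqt ▸ ht)
  · obtain ⟨t, ht, hvt⟩ := hv.2 hvP
    exact ⟨t, .inl ht, hvt⟩

theorem eq_extend_of_isMaxIndepSet (hP : IsIndepCoverWithPendants G P) {S : Set V}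
    (hS : IsMaxIndepSet G S) : S = extend G P (S ∩ P) := by
  ext v
  by_cases hvP : v ∈ P
  · simp [extend, hvP]
  simp only [extend, Set.mem_union, Set.mem_inter_iff, hvP, and_false, false_or,
    Set.mem_ofPred_eq, not_false_eq_true, true_and]
  refine ⟨fun hv t ht => hS.1 hv ht.1, fun hfree => ?_⟩
  by_contra hvS
  obtain ⟨s, hs, hvs⟩ := (isMaxIndepSet_iff.mp hS).2 v hvS
  exact hfree s ⟨hs, (hP.cover hvs).resolve_left hvP⟩ hvs

theorem numMaxIndep_eq [Finite V] (hP : IsIndepCoverWithPendants G P) :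
    numMaxIndep G = 2 ^ P.ncard := by
  have himage : {S | IsMaxIndepSet G S} = extend G P '' 𝒫 P := by
    ext S
    refine ⟨fun hS => ⟨S ∩ P, Set.inter_subset_right, (hP.eq_extend_of_isMaxIndepSet hS).symm⟩, ?_⟩
    rintro ⟨T, hT, rfl⟩
    exact hP.isMaxIndepSet_extend hT
  have hinj : Set.InjOn (extend G P) (𝒫 P) := fun T₁ hT₁ T₂ hT₂ h => by
    rw [← extend_inter hT₁, ← extend_inter hT₂, h]
  rw [numMaxIndep, himage, hinj.ncard_image, Set.ncard_powerset]

end IsIndepCoverWithPendants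

def IsMaximumMatching (G : SimpleGraph V) (M : Set (Sym2 V)) : Prop :=
  IsMatching G M ∧ ∀ M' : Set (Sym2 V), IsMatching G M' → M'.ncard ≤ M.ncard

theorem IsMatching.mono {M M' : Set (Sym2 V)} (hM : IsMatching G M) (h : M' ⊆ M) :
    IsMatching G M' :=
  ⟨h.trans hM.1, fun e he f hf => hM.2 e (h he) f (h hf)⟩

theorem IsMatching.insert {M : Set (Sym2 V)} (hM : IsMatching G M) {u v : V} (huv : G.Adj u v)
    (hfree : ∀ f ∈ M, u ∉ f ∧ v ∉ f) : IsMatching G (insert s(u, v) M) := by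
  have hdisj : ∀ f ∈ M, ∀ w ∈ s(u, v), w ∉ f := by
    intro f hf w hw
    rcases Sym2.mem_iff.mp hw with rfl | rfl
    exacts [(hfree f hf).1, (hfree f hf).2]
  refine ⟨Set.insert_subset huv hM.1, ?_⟩
  rintro e (rfl | he) f (rfl | hf) hef w hwe hwf
  · exact hef rfl
  · exact hdisj f hf w hwe hwf
  · exact hdisj e he w hwf hwe
  · exact hM.2 e he f hf hef w hwe hwf

theorem ncard_insert_mk_eq_succ [Finite V] {M : Set (Sym2 V)} {u : V} (v : V)
    (hu : ∀ f ∈ M, u ∉ f) : (insert s(u, v) M).ncard = M.ncard + 1 :=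
  Set.ncard_insert_of_notMem fun h => hu _ h (Sym2.mem_mk_left u v)

theorem IsMaximumMatching.exists_mem_of_adj [Finite V] {M : Set (Sym2 V)}
    (hM : IsMaximumMatching G M) {u v : V} (huv : G.Adj u v) : ∃ e ∈ M, u ∈ e ∨ v ∈ e := by
  by_contra! hfree
  have hlarger := hM.2 _ (hM.1.insert huv hfree)
  rw [ncard_insert_mk_eq_succ v fun f hf => (hfree f hf).1] at hlarger
  omega

theorem bddAbove_setOf_ncard {α : Type*} [Finite α] (p : Set α → Prop) :
    BddAbove {n | ∃ s : Set α, p s ∧ s.ncard = n} :=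
  ⟨Nat.card α, by rintro _ ⟨s, -, rfl⟩; exact Set.ncard_le_card s⟩

theorem exists_isInducedMatching_isMaximumMatching [Finite V]
    (hCW : inducedMatchingNumber G = matchingNumber G) :
    ∃ M, IsInducedMatching G M ∧ IsMaximumMatching G M := by
  have hempty : IsInducedMatching G ∅ := ⟨⟨Set.empty_subset _, by simp⟩, by simp⟩
  obtain ⟨M, hM, hcard⟩ : inducedMatchingNumber G ∈
      {n | ∃ M, IsInducedMatching G M ∧ M.ncard = n} :=
    Nat.sSup_mem ⟨0, ∅, hempty, Set.ncard_empty _⟩ (bddAbove_setOf_ncard _)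
  refine ⟨M, hM, hM.1, fun M' hM' => ?_⟩
  rw [hcard, hCW]
  exact le_csSup (bddAbove_setOf_ncard _) ⟨M', hM', rfl⟩

section CameronWalker

variable {M : Set (Sym2 V)}

theorem IsInducedMatching.notMem_of_adj (hM : IsInducedMatching G M) {u v w : V}
    (he : s(u, v) ∈ M) (hw : G.Adj u w) (hwv : w ≠ v) : ∀ f ∈ M, w ∉ f := by
  intro f hf hwf
  obtain rfl | hne := eq_or_ne s(u, v) f
  · rcases Sym2.mem_iff.mp hwf with rfl | rfl
    exacts [hw.ne rfl, hwv rfl]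
  · exact hM.2 _ he _ hf hne u w (Sym2.mem_mk_left u v) hwf hw

theorem IsInducedMatching.eq_or_eq_of_adj_of_adj [Finite V] (hbip : IsBipartite G)
    (hM : IsInducedMatching G M) (hmax : IsMaximumMatching G M) {u v u' v' : V}
    (he : s(u, v) ∈ M) (hu : G.Adj u u') (hv : G.Adj v v') : u' = v ∨ v' = u := by
  by_contra! ⟨hu'v, hv'u⟩
  obtain ⟨A, hA⟩ := hbip
  have huv : G.Adj u v := hM.1.1 he
  have hu'free := hM.notMem_of_adj he hu hu'v
  have hv'free := hM.notMem_of_adj (Sym2.eq_swap ▸ he) hv hv'u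
  have hu'v' : u' ≠ v' := by
    rintro rfl
    have := hA huv; have := hA hu; have := hA hv
    tauto
  have hvfree : ∀ f ∈ M \ {s(u, v)}, v ∉ f := fun f hf =>
    hM.1.2 _ he _ hf.1 (Ne.symm hf.2) v (Sym2.mem_mk_right u v)
  have hufree : ∀ f ∈ insert s(v, v') (M \ {s(u, v)}), u ∉ f ∧ u' ∉ f := by
    rintro f (rfl | hf)
    · simp only [Sym2.mem_iff, not_or]
      exact ⟨⟨huv.ne, hv'u.symm⟩, hu'v, hu'v'⟩
    · exact ⟨hM.1.2 _ he _ hf.1 (Ne.symm hf.2) u (Sym2.mem_mk_left u v), hu'free f hf.1⟩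
  have hmatching := ((hM.1.mono Set.sdiff_subset).insert hv
    fun f hf => ⟨hvfree f hf, hv'free f hf.1⟩).insert hu hufree
  have hlarger := hmax.2 _ hmatching
  rw [ncard_insert_mk_eq_succ u' fun f hf => (hufree f hf).1,
    ncard_insert_mk_eq_succ v' hvfree, Set.ncard_sdiff_singleton_add_one he] at hlarger
  omega

theorem IsInducedMatching.neighborSet_eq_singleton_or [Finite V] (hbip : IsBipartite G)
    (hM : IsInducedMatching G M) (hmax : IsMaximumMatching G M) {u v : V} (he : s(u, v) ∈ M) :
    G.neighborSet u = {v} ∨ G.neighborSet v = {u} := by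
  have huv : G.Adj u v := hM.1.1 he
  by_contra! hne
  simp only [ne_eq, Set.eq_singleton_iff_unique_mem, SimpleGraph.mem_neighborSet, huv, huv.symm,
    true_and, not_forall, exists_prop] at hne
  obtain ⟨⟨u', hu, hu'v⟩, ⟨v', hv, hv'u⟩⟩ := hne
  exact (hM.eq_or_eq_of_adj_of_adj hbip hmax he hu hv).elim hu'v hv'u

theorem exists_isIndepCoverWithPendants [Finite V] (hbip : IsBipartite G)
    (hM : IsInducedMatching G M) (hmax : IsMaximumMatching G M) :
    ∃ P, IsIndepCoverWithPendants G P := by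
  have hpendant : ∀ e : M, ∃ p q, (e : Sym2 V) = s(p, q) ∧ G.neighborSet q = {p} := by
    rintro ⟨e, he⟩
    induction e using Sym2.ind with | h u v => ?_
    rcases hM.neighborSet_eq_singleton_or hbip hmax he with h | h
    exacts [⟨v, u, Sym2.eq_swap, h⟩, ⟨u, v, rfl, h⟩]
  choose p q hpq hq using hpendant
  have hp_mem : ∀ e : M, p e ∈ (e : Sym2 V) := fun e => hpq e ▸ Sym2.mem_mk_left _ _
  have hcover : ∀ ⦃x y : V⦄, G.Adj x y → ∀ e : M, x ∈ (e : Sym2 V) →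
      x ∈ Set.range p ∨ y ∈ Set.range p := by
    intro x y hxy e hxe
    rw [hpq e, Sym2.mem_iff] at hxe
    rcases hxe with rfl | rfl
    · exact .inl ⟨e, rfl⟩
    · rw [← SimpleGraph.mem_neighborSet, hq e, Set.mem_singleton_iff] at hxy
      exact .inr ⟨e, hxy.symm⟩
  refine ⟨Set.range p, ⟨?_, fun x y hxy => ?_, ?_⟩⟩
  · rintro _ _ ⟨e, rfl⟩ ⟨f, rfl⟩ hadj
    obtain rfl | hne := eq_or_ne e f
    · exact hadj.ne rfl
    · exact hM.2 e e.2 f f.2 (Subtype.coe_ne_coe.mpr hne) _ _ (hp_mem e) (hp_mem f) hadj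
  · obtain ⟨e, he, hx | hy⟩ := hmax.exists_mem_of_adj hxy
    · exact hcover hxy ⟨e, he⟩ hx
    · exact (hcover hxy.symm ⟨e, he⟩ hy).symm
  · rintro _ ⟨e, rfl⟩
    exact ⟨q e, hq e⟩

end CameronWalker

/-- If `G` is a Cameron-Walker bipartite graph, then
`m(G) = 2 ^ β(G)`. -/
theorem numMaxIndep_eq_two_pow_coverNumber_of_cameronWalker_bipartite
    [Fintype V] (G : SimpleGraph V)
    (hbip : IsBipartite G) (hCW : inducedMatchingNumber G = matchingNumber G) :
    numMaxIndep G = 2 ^ coverNumber G := by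
  obtain ⟨M, hM, hmax⟩ := exists_isInducedMatching_isMaximumMatching hCW
  obtain ⟨P, hP⟩ := exists_isIndepCoverWithPendants hbip hM hmax
  rw [hP.numMaxIndep_eq, hP.coverNumber_eq]
end
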